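/- arXiv:1405.5093 — 2 statements merged into one kernel-verified Lean document; each statement's English description precedes it below -/
import Mathlib

section
/- With Jordan–Wigner operators on (ℂ²)^{⊗ 2N} (N ≥ 1), set P₁ = (1 + a₁ + a₁†)/2 and P₂ = (1 + a_{N+1} + a_{N+1}†)/2. Then P₁ P₂ P₁ = (1/2) P₁, i.e. P₁P₂P₁ equals (1/4)(1 + σₓ) ⊗ 1^{⊗(2N−1)}. -/
open Matrix

/-- Slot-wise tensor-product matrix on `(ℂ²)^{⊗n}`. -/
noncomputable def tm (n : ℕ) (f : Fin n → Matrix (Fin 2) (Fin 2) ℂ) :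
    Matrix (Fin n → Fin 2) (Fin n → Fin 2) ℂ :=
  fun x y => ∏ j, f j (x j) (y j)

lemma tm_mul (n : ℕ) (f g : Fin n → Matrix (Fin 2) (Fin 2) ℂ) :
    tm n f * tm n g = tm n (fun j => f j * g j) := by
  ext x y
  simp only [tm, Matrix.mul_apply]
  rw [Fintype.prod_sum (fun j t => f j (x j) t * g j t (y j))]
  apply Finset.sum_congr rfl
  intro z _
  rw [← Finset.prod_mul_distrib]

lemma tm_conjTranspose (n : ℕ) (f : Fin n → Matrix (Fin 2) (Fin 2) ℂ) :
    (tm n f)ᴴ = tm n (fun j => (f j)ᴴ) := by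
  ext x y
  simp only [tm, conjTranspose_apply, star_prod]

lemma tm_one (n : ℕ) : tm n (fun _ => 1) = 1 := by
  ext x y
  simp only [tm, Matrix.one_apply]
  by_cases h : x = y
  · subst h; simp
  · rw [if_neg h]
    obtain ⟨j, hj⟩ : ∃ j, x j ≠ y j := by
      by_contra hc; push_neg at hc; exact h (funext hc)
    exact Finset.prod_eq_zero (Finset.mem_univ j) (by simp [hj])

lemma tm_zero_slot (n : ℕ) (f : Fin n → Matrix (Fin 2) (Fin 2) ℂ) (i : Fin n)
    (h : f i = 0) : tm n f = 0 := by
  ext x y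
  exact Finset.prod_eq_zero (Finset.mem_univ i) (by simp [h])

lemma tm_add_slot (n : ℕ) (f g h : Fin n → Matrix (Fin 2) (Fin 2) ℂ) (i : Fin n)
    (hfg : ∀ j, j ≠ i → f j = h j) (hgh : ∀ j, j ≠ i → g j = h j)
    (hi : h i = f i + g i) : tm n f + tm n g = tm n h := by
  ext x y
  simp only [tm, Matrix.add_apply]
  rw [Fintype.prod_eq_mul_prod_compl i (fun j => f j (x j) (y j)),
      Fintype.prod_eq_mul_prod_compl i (fun j => g j (x j) (y j)),
      Fintype.prod_eq_mul_prod_compl i (fun j => h j (x j) (y j))]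
  have e1 : ∀ j ∈ ({i}ᶜ : Finset (Fin n)), f j (x j) (y j) = h j (x j) (y j) := by
    intro j hj; rw [hfg j (by simpa using hj)]
  have e2 : ∀ j ∈ ({i}ᶜ : Finset (Fin n)), g j (x j) (y j) = h j (x j) (y j) := by
    intro j hj; rw [hgh j (by simpa using hj)]
  rw [Finset.prod_congr rfl e1, Finset.prod_congr rfl e2, ← add_mul, hi]
  simp [Matrix.add_apply]

lemma tm_smul_slot (n : ℕ) (c : ℂ) (f h : Fin n → Matrix (Fin 2) (Fin 2) ℂ) (i : Fin n)
    (hfh : ∀ j, j ≠ i → f j = h j) (hi : h i = c • f i) :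
    tm n h = c • tm n f := by
  ext x y
  simp only [tm, Matrix.smul_apply, smul_eq_mul]
  rw [Fintype.prod_eq_mul_prod_compl i (fun j => f j (x j) (y j)),
      Fintype.prod_eq_mul_prod_compl i (fun j => h j (x j) (y j))]
  have e1 : ∀ j ∈ ({i}ᶜ : Finset (Fin n)), h j (x j) (y j) = f j (x j) (y j) := by
    intro j hj; rw [hfh j (by simpa using hj)]
  rw [Finset.prod_congr rfl e1, hi]
  simp [Matrix.smul_apply]; ring

lemma tm_congr (n : ℕ) (f g : Fin n → Matrix (Fin 2) (Fin 2) ℂ)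
    (h : ∀ j, f j = g j) : tm n f = tm n g :=
  congrArg (tm n) (funext h)

/-- The Jordan–Wigner operator `a_i = σ_z^{⊗(i−1)} ⊗ σ₋ ⊗ 1^{⊗(n−i)}` on `(ℂ²)^{⊗n}`. -/
noncomputable def jordanWigner (n : ℕ) (i : Fin n) :
    Matrix (Fin n → Fin 2) (Fin n → Fin 2) ℂ :=
  fun x y => ∏ j : Fin n,
    if j < i then (!![1, 0; 0, -1] : Matrix (Fin 2) (Fin 2) ℂ) (x j) (y j)
    else if j = i then (!![0, 0; 1, 0] : Matrix (Fin 2) (Fin 2) ℂ) (x j) (y j)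
    else if x j = y j then 1 else 0

lemma jordanWigner_eq_tm (n : ℕ) (i : Fin n) :
    jordanWigner n i = tm n (fun j =>
      if j < i then !![1, 0; 0, -1] else if j = i then !![0, 0; 1, 0] else 1) := by
  ext x y
  simp only [jordanWigner, tm]
  apply Finset.prod_congr rfl
  intro j _
  by_cases h1 : j < i
  · simp [h1]
  · by_cases h2 : j = i
    · simp [h1, h2]
    · simp [h1, h2, Matrix.one_apply]

noncomputable def Xf (n : ℕ) : Fin n → Matrix (Fin 2) (Fin 2) ℂ :=
  fun j => if (j : ℕ) = 0 then !![1, 1; 1, 1] else 1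

noncomputable def Yf (n N : ℕ) : Fin n → Matrix (Fin 2) (Fin 2) ℂ :=
  fun j => if (j : ℕ) < N then !![1, 0; 0, -1]
    else if (j : ℕ) = N then !![0, 1; 1, 0] else 1

lemma Sm_ct : (!![0, 0; 1, 0] : Matrix (Fin 2) (Fin 2) ℂ)ᴴ = !![0, 1; 0, 0] := by
  ext a b; fin_cases a <;> fin_cases b <;> simp

lemma Z_ct : (!![1, 0; 0, -1] : Matrix (Fin 2) (Fin 2) ℂ)ᴴ = !![1, 0; 0, -1] := by
  ext a b; fin_cases a <;> fin_cases b <;> simp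

lemma W_mul_W : (!![1, 1; 1, 1] : Matrix (Fin 2) (Fin 2) ℂ) * !![1, 1; 1, 1] =
    (2 : ℂ) • !![1, 1; 1, 1] := by
  ext a b; fin_cases a <;> fin_cases b <;>
    simp [Matrix.mul_apply, Fin.sum_univ_two] <;> norm_num

lemma WZW : (!![1, 1; 1, 1] : Matrix (Fin 2) (Fin 2) ℂ) * !![1, 0; 0, -1] * !![1, 1; 1, 1]
    = 0 := by
  ext a b; fin_cases a <;> fin_cases b <;>
    simp [Matrix.mul_apply, Fin.sum_univ_two]

lemma one_add_pm : (1 : Matrix (Fin 2) (Fin 2) ℂ) + !![0, 0; 1, 0] + !![0, 1; 0, 0] =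
    !![1, 1; 1, 1] := by
  ext a b; fin_cases a <;> fin_cases b <;> simp [Matrix.one_apply]

lemma pm_add : (!![0, 0; 1, 0] : Matrix (Fin 2) (Fin 2) ℂ) + !![0, 1; 0, 0] =
    !![0, 1; 1, 0] := by
  ext a b; fin_cases a <;> fin_cases b <;> simp

lemma hApart (n : ℕ) (h : 0 < n) :
    (1 : Matrix (Fin n → Fin 2) (Fin n → Fin 2) ℂ) + jordanWigner n ⟨0, h⟩ +
      (jordanWigner n ⟨0, h⟩)ᴴ = tm n (Xf n) := by
  have hF : jordanWigner n ⟨0, h⟩ =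
      tm n (fun j => if (j : ℕ) = 0 then !![0, 0; 1, 0] else 1) := by
    rw [jordanWigner_eq_tm]
    apply tm_congr
    intro j
    have h1 : ¬ j < (⟨0, h⟩ : Fin n) := by simp [Fin.lt_def]
    have h2 : j = (⟨0, h⟩ : Fin n) ↔ (j : ℕ) = 0 := by simp [Fin.ext_iff]
    rw [if_neg h1]
    by_cases h3 : (j : ℕ) = 0
    · rw [if_pos (h2.mpr h3), if_pos h3]
    · rw [if_neg (fun hc => h3 (h2.mp hc)), if_neg h3]
  have hF' : (jordanWigner n ⟨0, h⟩)ᴴ =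
      tm n (fun j => if (j : ℕ) = 0 then !![0, 1; 0, 0] else 1) := by
    rw [hF, tm_conjTranspose]
    apply tm_congr
    intro j
    rw [apply_ite conjTranspose, Sm_ct, conjTranspose_one]
  rw [hF', hF, ← tm_one n]
  have step1 : tm n (fun _ => (1 : Matrix (Fin 2) (Fin 2) ℂ)) +
      tm n (fun j => if (j : ℕ) = 0 then !![0, 0; 1, 0] else 1) =
      tm n (fun j => if (j : ℕ) = 0 then 1 + !![0, 0; 1, 0] else 1) := by
    apply tm_add_slot n _ _ _ ⟨0, h⟩
    · intro j hj
      have : ¬ (j : ℕ) = 0 := fun hc => hj (Fin.ext hc)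
      simp [this]
    · intro j hj
      have : ¬ (j : ℕ) = 0 := fun hc => hj (Fin.ext hc)
      simp [this]
    · simp
  rw [step1]
  apply tm_add_slot n _ _ _ ⟨0, h⟩
  · intro j hj
    have : ¬ (j : ℕ) = 0 := fun hc => hj (Fin.ext hc)
    simp [Xf, this]
  · intro j hj
    have : ¬ (j : ℕ) = 0 := fun hc => hj (Fin.ext hc)
    simp [Xf, this]
  · simp [Xf, ← one_add_pm, add_assoc]

lemma hBpart (n N : ℕ) (hNn : N < n) :
    jordanWigner n ⟨N, hNn⟩ + (jordanWigner n ⟨N, hNn⟩)ᴴ = tm n (Yf n N) := by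
  have hF : jordanWigner n ⟨N, hNn⟩ =
      tm n (fun j => if (j : ℕ) < N then !![1, 0; 0, -1]
        else if (j : ℕ) = N then !![0, 0; 1, 0] else 1) := by
    rw [jordanWigner_eq_tm]
    apply tm_congr
    intro j
    have h1 : j < (⟨N, hNn⟩ : Fin n) ↔ (j : ℕ) < N := by simp [Fin.lt_def]
    have h2 : j = (⟨N, hNn⟩ : Fin n) ↔ (j : ℕ) = N := by simp [Fin.ext_iff]
    by_cases hlt : (j : ℕ) < N
    · rw [if_pos (h1.mpr hlt), if_pos hlt]
    · rw [if_neg (fun hc => hlt (h1.mp hc)), if_neg hlt]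
      by_cases heq : (j : ℕ) = N
      · rw [if_pos (h2.mpr heq), if_pos heq]
      · rw [if_neg (fun hc => heq (h2.mp hc)), if_neg heq]
  have hF' : (jordanWigner n ⟨N, hNn⟩)ᴴ =
      tm n (fun j => if (j : ℕ) < N then !![1, 0; 0, -1]
        else if (j : ℕ) = N then !![0, 1; 0, 0] else 1) := by
    rw [hF, tm_conjTranspose]
    apply tm_congr
    intro j
    rw [apply_ite conjTranspose, apply_ite conjTranspose, Sm_ct, Z_ct, conjTranspose_one]
  rw [hF', hF]
  apply tm_add_slot n _ _ _ ⟨N, hNn⟩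
  · intro j hj
    have hne : ¬ (j : ℕ) = N := fun hc => hj (Fin.ext hc)
    by_cases hlt : (j : ℕ) < N <;> simp [Yf, hlt, hne]
  · intro j hj
    have hne : ¬ (j : ℕ) = N := fun hc => hj (Fin.ext hc)
    by_cases hlt : (j : ℕ) < N <;> simp [Yf, hlt, hne]
  · simp [Yf, pm_add]

lemma hXXpart (n : ℕ) (h : 0 < n) :
    tm n (Xf n) * tm n (Xf n) = (2 : ℂ) • tm n (Xf n) := by
  rw [tm_mul]
  apply tm_smul_slot n 2 (Xf n) _ ⟨0, h⟩
  · intro j hj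
    have : ¬ (j : ℕ) = 0 := fun hc => hj (Fin.ext hc)
    simp [Xf, this]
  · simp only [Xf, Fin.val_mk, if_pos rfl]
    exact W_mul_W

lemma hXYXpart (n N : ℕ) (h0 : 0 < N) (hNn : N < n) :
    tm n (Xf n) * tm n (Yf n N) * tm n (Xf n) = 0 := by
  have h : 0 < n := lt_trans h0 hNn
  rw [tm_mul, tm_mul]
  apply tm_zero_slot n _ ⟨0, h⟩
  simp only [Xf, Yf, Fin.val_mk, if_pos rfl, if_pos h0]
  exact WZW

/-- With `P₁ = (1 + a₁ + a₁†)/2` and `P₂ = (1 + a_{N+1} + a_{N+1}†)/2` built from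
Jordan–Wigner operators on `(ℂ²)^{⊗2N}`, one has `P₁ P₂ P₁ = (1/2) P₁`. -/
theorem jordanWigner_P1P2P1 (N : ℕ) (hN : 1 ≤ N) :
    let a₁ := jordanWigner (2 * N) ⟨0, by omega⟩
    let aN1 := jordanWigner (2 * N) ⟨N, by omega⟩
    let P₁ := ((2 : ℂ)⁻¹) • (1 + a₁ + a₁ᴴ)
    let P₂ := ((2 : ℂ)⁻¹) • (1 + aN1 + aN1ᴴ)
    P₁ * P₂ * P₁ = ((2 : ℂ)⁻¹) • P₁ := by
  have h0 : 0 < 2 * N := by omega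
  have hNn : N < 2 * N := by omega
  show ((2:ℂ)⁻¹ • (1 + jordanWigner (2*N) ⟨0, by omega⟩ + (jordanWigner (2*N) ⟨0, by omega⟩)ᴴ)) *
      ((2:ℂ)⁻¹ • (1 + jordanWigner (2*N) ⟨N, by omega⟩ + (jordanWigner (2*N) ⟨N, by omega⟩)ᴴ)) *
      ((2:ℂ)⁻¹ • (1 + jordanWigner (2*N) ⟨0, by omega⟩ + (jordanWigner (2*N) ⟨0, by omega⟩)ᴴ)) =
      (2:ℂ)⁻¹ • ((2:ℂ)⁻¹ • (1 + jordanWigner (2*N) ⟨0, by omega⟩ +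
        (jordanWigner (2*N) ⟨0, by omega⟩)ᴴ))
  have hA : (1 : Matrix (Fin (2*N) → Fin 2) (Fin (2*N) → Fin 2) ℂ) +
      jordanWigner (2*N) ⟨0, by omega⟩ + (jordanWigner (2*N) ⟨0, by omega⟩)ᴴ =
      tm (2*N) (Xf (2*N)) := hApart (2*N) h0
  have hB : (1 : Matrix (Fin (2*N) → Fin 2) (Fin (2*N) → Fin 2) ℂ) +
      jordanWigner (2*N) ⟨N, by omega⟩ + (jordanWigner (2*N) ⟨N, by omega⟩)ᴴ =
      1 + tm (2*N) (Yf (2*N) N) := by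
    rw [add_assoc, hBpart (2*N) N hNn]
  rw [hA, hB]
  have key : tm (2*N) (Xf (2*N)) * (1 + tm (2*N) (Yf (2*N) N)) * tm (2*N) (Xf (2*N)) =
      (2 : ℂ) • tm (2*N) (Xf (2*N)) := by
    rw [mul_add, mul_one, add_mul, hXXpart (2*N) h0, hXYXpart (2*N) N hN hNn, add_zero]
  simp only [smul_mul_assoc, mul_smul_comm, smul_smul, key]
  norm_num
end

section
/- Let N be odd, |Ψ⟩ = (|N;0⟩+|0;N⟩)/√2, and ρ_sep = ½|N;0⟩⟨N;0| + ½|0;N⟩⟨0;N|. For all operators A₁ in the even subalgebra generated by {a_i, a_i† : i ≤ N} and A₂ in the even subalgebra generated by {a_j, a_j† : j > N}, one has ⟨Ψ|A₁A₂|Ψ⟩ = Tr(ρ_sep A₁A₂). -/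
open Matrix

/-- The Fock vacuum: the basis vector annihilated by all `a_i`. -/
noncomputable def jwVac (n : ℕ) : (Fin n → Fin 2) → ℂ :=
  fun x => if x = (fun _ => 1) then 1 else 0

/-- `|N;0⟩ = a₁†⋯a_N†|0⟩` for `2N` modes. -/
noncomputable def ketN0 (N : ℕ) : (Fin (2 * N) → Fin 2) → ℂ :=
  ((List.ofFn fun k : Fin N =>
    (jordanWigner (2 * N) ⟨k, by omega⟩)ᴴ).prod).mulVec (jwVac (2 * N))

/-- `|0;N⟩ = a_{N+1}†⋯a_{2N}†|0⟩` for `2N` modes. -/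
noncomputable def ket0N (N : ℕ) : (Fin (2 * N) → Fin 2) → ℂ :=
  ((List.ofFn fun k : Fin N =>
    (jordanWigner (2 * N) ⟨N + k, by omega⟩)ᴴ).prod).mulVec (jwVac (2 * N))

/-- `|Ψ⟩ = (|N;0⟩ + |0;N⟩)/√2`. -/
noncomputable def ketPsi (N : ℕ) : (Fin (2 * N) → Fin 2) → ℂ :=
  ((Real.sqrt 2 : ℂ))⁻¹ • (ketN0 N + ket0N N)

/-- The even subalgebra (as a linear span of even monomials) generated by the
creation and annihilation operators of modes `i` with `P i`. -/
noncomputable def evenSpan (N : ℕ) (P : Fin (2 * N) → Prop) :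
    Submodule ℂ (Matrix (Fin (2 * N) → Fin 2) (Fin (2 * N) → Fin 2) ℂ) :=
  Submodule.span ℂ {M | ∃ l : List (Matrix (Fin (2 * N) → Fin 2) (Fin (2 * N) → Fin 2) ℂ),
    (∀ A ∈ l, ∃ i : Fin (2 * N), P i ∧
      (A = jordanWigner (2 * N) i ∨ A = (jordanWigner (2 * N) i)ᴴ)) ∧
    Even l.length ∧ M = l.prod}

/-- The separable density matrix `ρ_sep = ½|N;0⟩⟨N;0| + ½|0;N⟩⟨0;N|`. -/
noncomputable def rhoSep (N : ℕ) : Matrix (Fin (2 * N) → Fin 2) (Fin (2 * N) → Fin 2) ℂ :=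
  ((2 : ℂ)⁻¹) • vecMulVec (ketN0 N) (star (ketN0 N)) +
  ((2 : ℂ)⁻¹) • vecMulVec (ket0N N) (star (ket0N N))

/-!
The number of particles in the first `N` modes changes by one under every `a_i`, `a_i†` with
`i ≤ N` and is left alone by those with `i > N`, so its parity grades the Fock space and both
even subalgebras, hence `A₁A₂`, preserve it. For odd `N` the states `|N;0⟩` and `|0;N⟩` have
different parities, so the cross terms `⟨N;0|A₁A₂|0;N⟩` and `⟨0;N|A₁A₂|N;0⟩` of `⟨Ψ|A₁A₂|Ψ⟩`
vanish, and what remains is `Tr(ρ_sep A₁A₂)`.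
-/

open Function

namespace Matrix

variable {ι R G : Type*}

section Homogeneous

variable [Semiring R] [AddMonoid G]

/-- The degree-`c` matrices for the grading of `ι → R` that puts the basis vector at `x` in
degree `g x`. -/
def homogeneous (g : ι → G) (c : G) : Submodule R (Matrix ι ι R) where
  carrier := {M | ∀ x y, M x y ≠ 0 → g x = c + g y}
  add_mem' {M M'} hM hM' x y h := by
    by_cases hxy : M x y = 0
    · exact hM' x y (by simpa [hxy] using h)
    · exact hM x y hxy
  zero_mem' x y h := absurd rfl h
  smul_mem' a M hM x y h := hM x y fun h0 => h (by simp [h0])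

variable {g : ι → G}

theorem one_mem_homogeneous [DecidableEq ι] : (1 : Matrix ι ι R) ∈ homogeneous g 0 := by
  intro x y h
  obtain rfl : x = y := by_contra fun hxy => h (one_apply_ne hxy)
  rw [zero_add]

theorem mul_mem_homogeneous [Fintype ι] {c c' : G} {M M' : Matrix ι ι R}
    (hM : M ∈ homogeneous g c) (hM' : M' ∈ homogeneous g c') :
    M * M' ∈ homogeneous g (c + c') := by
  intro x y h
  obtain ⟨z, -, hz⟩ := Finset.exists_ne_zero_of_sum_ne_zero h
  rw [hM x z (left_ne_zero_of_mul hz), hM' z y (right_ne_zero_of_mul hz), add_assoc]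

theorem list_prod_mem_homogeneous [Fintype ι] [DecidableEq ι] {c : G}
    {l : List (Matrix ι ι R)} (hl : ∀ A ∈ l, A ∈ homogeneous g c) :
    l.prod ∈ homogeneous g (l.length • c) := by
  induction l with
  | nil => simpa using one_mem_homogeneous
  | cons A l ih =>
    rw [List.prod_cons, List.length_cons, succ_nsmul']
    exact mul_mem_homogeneous (hl A List.mem_cons_self)
      (ih fun B hB => hl B (List.mem_cons_of_mem A hB))

theorem support_mulVec_subset [Fintype ι] {c d : G} {M : Matrix ι ι R} {v : ι → R}
    (hM : M ∈ homogeneous g c) (hv : support v ⊆ g ⁻¹' {d}) :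
    support (M *ᵥ v) ⊆ g ⁻¹' {c + d} := by
  intro x h
  obtain ⟨y, -, hy⟩ := Finset.exists_ne_zero_of_sum_ne_zero h
  rw [Set.mem_preimage, Set.mem_singleton_iff, hM x y (left_ne_zero_of_mul hy),
    hv (right_ne_zero_of_mul hy)]

theorem list_prod_mulVec_support_subset [Fintype ι] [DecidableEq ι] {c d : G}
    {l : List (Matrix ι ι R)} {v : ι → R} (hl : ∀ A ∈ l, A ∈ homogeneous g c)
    (hv : support v ⊆ g ⁻¹' {d}) :
    support (l.prod *ᵥ v) ⊆ g ⁻¹' {l.length • c + d} :=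
  support_mulVec_subset (list_prod_mem_homogeneous hl) hv

theorem star_dotProduct_mulVec_eq_zero [Fintype ι] [StarRing R] {d₁ d₂ : G}
    {M : Matrix ι ι R} {u v : ι → R} (hM : M ∈ homogeneous g 0)
    (hu : support u ⊆ g ⁻¹' {d₁}) (hv : support v ⊆ g ⁻¹' {d₂}) (hd : d₁ ≠ d₂) :
    star u ⬝ᵥ M *ᵥ v = 0 := by
  refine Finset.sum_eq_zero fun x _ => ?_
  by_contra h
  have hux : u x ≠ 0 := fun h0 => h (by simp [h0])
  have hMv : x ∈ support (M *ᵥ v) := right_ne_zero_of_mul h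
  exact hd (by simpa using (hu hux).symm.trans (support_mulVec_subset hM hv hMv))

end Homogeneous

theorem conjTranspose_mem_homogeneous [Semiring R] [StarRing R] [AddGroup G] {g : ι → G}
    {c : G} {M : Matrix ι ι R} (hM : M ∈ homogeneous g c) : Mᴴ ∈ homogeneous g (-c) :=
  fun x y h => eq_neg_add_of_add_eq (hM y x (by simpa using h)).symm

theorem trace_vecMulVec_mul [Fintype ι] [CommSemiring R] (u w : ι → R) (M : Matrix ι ι R) :
    trace (vecMulVec u w * M) = w ⬝ᵥ M *ᵥ u := by
  rw [vecMulVec_mul, trace_vecMulVec, dotProduct_comm, dotProduct_mulVec]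

theorem star_dotProduct_mulVec_eq_trace_of_cross_eq_zero [Fintype ι] {u v : ι → ℂ}
    {M : Matrix ι ι ℂ} (huv : star u ⬝ᵥ M *ᵥ v = 0) (hvu : star v ⬝ᵥ M *ᵥ u = 0) :
    star ((Real.sqrt 2 : ℂ)⁻¹ • (u + v)) ⬝ᵥ M *ᵥ ((Real.sqrt 2 : ℂ)⁻¹ • (u + v)) =
      trace (((2 : ℂ)⁻¹ • vecMulVec u (star u) + (2 : ℂ)⁻¹ • vecMulVec v (star v)) * M) := by
  have hsqrt : star (Real.sqrt 2 : ℂ)⁻¹ * (Real.sqrt 2 : ℂ)⁻¹ = (2 : ℂ)⁻¹ := by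
    rw [star_inv₀, Complex.star_def, Complex.conj_ofReal, ← mul_inv, ← Complex.ofReal_mul,
      Real.mul_self_sqrt zero_le_two, Complex.ofReal_ofNat]
  rw [star_smul, mulVec_smul, smul_dotProduct, dotProduct_smul, smul_smul, hsqrt, add_mul,
    smul_mul, smul_mul, trace_add, trace_smul, trace_smul, trace_vecMulVec_mul,
    trace_vecMulVec_mul, star_add, mulVec_add, add_dotProduct, dotProduct_add, dotProduct_add,
    huv, hvu, add_zero, zero_add, smul_add]

end Matrix

section JordanWigner

/-- The label `1` is an empty mode (`jwVac` is the all-`1` vector), so this is the parity of the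
number of empty modes in `s`. -/
def labelParity {n : ℕ} (s : Finset (Fin n)) (x : Fin n → Fin 2) : ZMod 2 :=
  ∑ j ∈ s, ((x j : ℕ) : ZMod 2)

theorem eq_of_sigmaZ_apply_ne_zero {a b : Fin 2}
    (h : (!![1, 0; 0, -1] : Matrix (Fin 2) (Fin 2) ℂ) a b ≠ 0) : a = b := by
  fin_cases a <;> fin_cases b <;> simp_all

theorem sigmaMinus_apply_ne_zero {a b : Fin 2}
    (h : (!![0, 0; 1, 0] : Matrix (Fin 2) (Fin 2) ℂ) a b ≠ 0) : a = 1 ∧ b = 0 := by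
  fin_cases a <;> fin_cases b <;> simp_all

theorem Fin.two_natCast_eq_one_add_of_ne {a b : Fin 2} (h : a ≠ b) :
    ((a : ℕ) : ZMod 2) = 1 + ((b : ℕ) : ZMod 2) := by
  fin_cases a <;> fin_cases b <;> first | decide | exact absurd rfl h

theorem jordanWigner_apply_ne_zero {n : ℕ} {i : Fin n} {x y : Fin n → Fin 2}
    (h : jordanWigner n i x y ≠ 0) : x i = 1 ∧ y i = 0 ∧ ∀ j ≠ i, x j = y j := by
  have hfactor := fun j => Finset.prod_ne_zero_iff.mp h j (Finset.mem_univ j)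
  have hi := hfactor i
  simp only [lt_irrefl, if_false, if_true] at hi
  refine ⟨(sigmaMinus_apply_ne_zero hi).1, (sigmaMinus_apply_ne_zero hi).2, fun j hji => ?_⟩
  have hj := hfactor j
  split_ifs at hj with hlt hxy
  · exact eq_of_sigmaZ_apply_ne_zero hj
  · exact hxy
  · exact absurd rfl hj

theorem labelParity_eq_add_of_eq_of_ne {n : ℕ} (s : Finset (Fin n)) {i : Fin n}
    {x y : Fin n → Fin 2} (hi : x i ≠ y i) (hx : ∀ j ≠ i, x j = y j) :
    labelParity s x = (if i ∈ s then 1 else 0) + labelParity s y := by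
  unfold labelParity
  split_ifs with his
  · rw [← Finset.add_sum_erase s _ his, ← Finset.add_sum_erase s _ his, ← add_assoc,
      Fin.two_natCast_eq_one_add_of_ne hi,
      Finset.sum_congr rfl fun j hj => by rw [hx j (Finset.ne_of_mem_erase hj)]]
  · rw [zero_add]
    exact Finset.sum_congr rfl fun j hj => by rw [hx j (ne_of_mem_of_not_mem hj his)]

theorem jordanWigner_mem_homogeneous {n : ℕ} (s : Finset (Fin n)) (i : Fin n) :
    jordanWigner n i ∈ homogeneous (labelParity s) (if i ∈ s then 1 else 0) := by
  intro x y h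
  obtain ⟨hx, hy, hxy⟩ := jordanWigner_apply_ne_zero h
  exact labelParity_eq_add_of_eq_of_ne s (by simp [hx, hy]) hxy

theorem conjTranspose_jordanWigner_mem_homogeneous {n : ℕ} (s : Finset (Fin n)) (i : Fin n) :
    (jordanWigner n i)ᴴ ∈ homogeneous (labelParity s) (if i ∈ s then 1 else 0) := by
  simpa [ZMod.neg_eq_self_mod_two] using
    conjTranspose_mem_homogeneous (jordanWigner_mem_homogeneous s i)

theorem support_jwVac {n : ℕ} (s : Finset (Fin n)) :
    support (jwVac n) ⊆ labelParity s ⁻¹' {(s.card : ZMod 2)} := by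
  intro x hx
  obtain rfl : x = fun _ => 1 := by_contra fun h => hx (if_neg h)
  simp [labelParity]

theorem evenSpan_le_homogeneous {N : ℕ} {P : Fin (2 * N) → Prop}
    {g : (Fin (2 * N) → Fin 2) → ZMod 2} (c : ZMod 2)
    (hP : ∀ i, P i → jordanWigner (2 * N) i ∈ homogeneous g c) :
    evenSpan N P ≤ homogeneous g 0 := by
  rw [evenSpan, Submodule.span_le]
  rintro _ ⟨l, hl, hev, rfl⟩
  have hdeg : ∀ A ∈ l, A ∈ homogeneous g c := by
    intro A hA
    obtain ⟨i, hi, rfl | rfl⟩ := hl A hA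
    · exact hP i hi
    · simpa using conjTranspose_mem_homogeneous (hP i hi)
  simpa [nsmul_eq_mul, hev.natCast_zmod_two] using list_prod_mem_homogeneous hdeg

def lowerModes (N : ℕ) : Finset (Fin (2 * N)) :=
  {i | (i : ℕ) < N}

theorem card_lowerModes (N : ℕ) : (lowerModes N).card = N := by
  simp [lowerModes, Fin.card_filter_val_lt]; omega

theorem support_ketN0 (N : ℕ) : support (ketN0 N) ⊆ labelParity (lowerModes N) ⁻¹' {0} := by
  have hdeg : ∀ A ∈ List.ofFn (fun k : Fin N => (jordanWigner (2 * N) ⟨k, by omega⟩)ᴴ),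
      A ∈ homogeneous (labelParity (lowerModes N)) 1 := by
    refine List.forall_mem_ofFn_iff.mpr fun k => ?_
    simpa [lowerModes] using
      conjTranspose_jordanWigner_mem_homogeneous (lowerModes N) ⟨k, by omega⟩
  unfold ketN0
  simpa [card_lowerModes, CharTwo.add_self_eq_zero] using
    list_prod_mulVec_support_subset hdeg (support_jwVac (lowerModes N))

theorem support_ket0N (N : ℕ) :
    support (ket0N N) ⊆ labelParity (lowerModes N) ⁻¹' {(N : ZMod 2)} := by
  have hdeg : ∀ A ∈ List.ofFn (fun k : Fin N => (jordanWigner (2 * N) ⟨N + k, by omega⟩)ᴴ),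
      A ∈ homogeneous (labelParity (lowerModes N)) 0 := by
    refine List.forall_mem_ofFn_iff.mpr fun k => ?_
    simpa [lowerModes] using
      conjTranspose_jordanWigner_mem_homogeneous (lowerModes N) ⟨N + k, by omega⟩
  unfold ket0N
  simpa [card_lowerModes] using
    list_prod_mulVec_support_subset hdeg (support_jwVac (lowerModes N))

end JordanWigner

/-- For `N` odd, the pure state `|Ψ⟩` and the separable state `ρ_sep` agree on all
products `A₁A₂` of even-subalgebra elements of the two partitions. -/
theorem pure_state_agrees_with_separable_on_even (N : ℕ) (hN : Odd N)
    (A₁ A₂ : Matrix (Fin (2 * N) → Fin 2) (Fin (2 * N) → Fin 2) ℂ)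
    (hA₁ : A₁ ∈ evenSpan N (fun i => (i : ℕ) < N))
    (hA₂ : A₂ ∈ evenSpan N (fun i => N ≤ (i : ℕ))) :
    star (ketPsi N) ⬝ᵥ (A₁ * A₂).mulVec (ketPsi N) =
      Matrix.trace (rhoSep N * (A₁ * A₂)) := by
  have hA₁' : A₁ ∈ homogeneous (labelParity (lowerModes N)) 0 :=
    evenSpan_le_homogeneous 1 (fun i hi => by
      simpa [lowerModes, hi] using jordanWigner_mem_homogeneous (lowerModes N) i) hA₁
  have hA₂' : A₂ ∈ homogeneous (labelParity (lowerModes N)) 0 :=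
    evenSpan_le_homogeneous 0 (fun i hi => by
      simpa [lowerModes, hi.not_gt] using jordanWigner_mem_homogeneous (lowerModes N) i) hA₂
  have hM : A₁ * A₂ ∈ homogeneous (labelParity (lowerModes N)) 0 := by
    simpa using mul_mem_homogeneous hA₁' hA₂'
  have hparity : (0 : ZMod 2) ≠ N := by
    rw [hN.natCast_zmod_two]
    decide
  exact star_dotProduct_mulVec_eq_trace_of_cross_eq_zero
    (star_dotProduct_mulVec_eq_zero hM (support_ketN0 N) (support_ket0N N) hparity)
    (star_dotProduct_mulVec_eq_zero hM (support_ket0N N) (support_ketN0 N) hparity.symm)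
end
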